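/- For any integer n > 1 and any prime p ≡ 1 (mod q) with q > 0, the p-adic valuation of gcd_{0<k<n} C(qn, qk) equals 1 if α_p(qn) = q, and equals 0 otherwise. -/

import Mathlib

/-!
Write `s` for the base-`p` digit sum. Since `q ∣ p - 1`, `m ≡ s m [MOD q]`, so every positive
multiple of `q` has `s ≥ q`. Kummer's theorem `(p - 1) * v_p (C(a + c, a)) = s a + s c - s (a + c)`
then shows `v_p (C(qn, qk)) ≥ 1` for all `0 < k < n` when `s (qn) = q`. The valuation of the gcd is
the least valuation of its terms, so it remains to find one `k` attaining the bound. Split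
`qn = a + c` with `s a = q`: without carries when `s (qn) > q`, giving valuation `0`, and with a
single borrow and `s c = p - 1` when `s (qn) = q`, giving valuation `1`. In both cases `q ∣ a`
because `q ∣ s a`.
-/

namespace Nat

section DigitSum

variable {b : ℕ}

theorem digits_sum_add_base_pow_mul (hb : 1 < b) {j v : ℕ} (hv : v < b ^ j) (u : ℕ) :
    (b.digits (v + b ^ j * u)).sum = (b.digits v).sum + (b.digits u).sum := by
  rcases u.eq_zero_or_pos with rfl | hu
  · simp
  rw [← Nat.add_sub_cancel' ((digits_length_le_iff hb v).2 hv),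
    ← digits_append_zeroes_append_digits hb hu]
  simp

theorem digits_sum_of_lt {d : ℕ} (hd : d < b) : (b.digits d).sum = d := by
  rcases d.eq_zero_or_pos with rfl | hd0
  · simp
  · simp [digits_of_lt b d hd0.ne' hd]

theorem digits_sum_add_base_mul (hb : 1 < b) {r : ℕ} (hr : r < b) (u : ℕ) :
    (b.digits (r + b * u)).sum = r + (b.digits u).sum := by
  have h := digits_sum_add_base_pow_mul hb (j := 1) (v := r) (by rwa [pow_one]) u
  rwa [pow_one, digits_sum_of_lt hr] at h

theorem digits_sum_base_pow_mul (hb : 1 < b) (i u : ℕ) :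
    (b.digits (b ^ i * u)).sum = (b.digits u).sum := by
  simpa using digits_sum_add_base_pow_mul hb (v := 0) (pow_pos (zero_lt_of_lt hb) i) u

theorem digits_sum_base_mul (hb : 1 < b) (u : ℕ) : (b.digits (b * u)).sum = (b.digits u).sum := by
  simpa using digits_sum_base_pow_mul hb 1 u

theorem digits_sum_pos {m : ℕ} (hm : m ≠ 0) : 0 < (b.digits m).sum :=
  List.sum_pos_iff_exists_pos_nat.mpr
    ⟨_, List.getLast_mem _, Nat.pos_of_ne_zero (getLast_digit_ne_zero b hm)⟩

theorem digits_sum_succ_of_not_dvd (hb : 1 < b) {z : ℕ} (hz : ¬b ∣ z + 1) :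
    (b.digits (z + 1)).sum = (b.digits z).sum + 1 := by
  have hr : (z + 1) % b ≠ 0 := fun h => hz (dvd_of_mod_eq_zero h)
  have hlt : (z + 1) % b < b := mod_lt _ (zero_lt_of_lt hb)
  have hz' : z = ((z + 1) % b - 1) + b * ((z + 1) / b) := by
    have := mod_add_div (z + 1) b
    omega
  conv_lhs => rw [← mod_add_div (z + 1) b]
  conv_rhs => rw [hz']
  rw [digits_sum_add_base_mul hb hlt, digits_sum_add_base_mul hb (by omega)]
  omega

theorem digits_sum_add_base_pow (hb : 1 < b) {r : ℕ} (hr : r + 1 < b) :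
    ∀ i, (b.digits (r + b ^ i)).sum = r + 1
  | 0 => digits_sum_of_lt hr
  | i + 1 => by
    rw [pow_succ', digits_sum_add_base_mul hb (by omega), ← mul_one (b ^ i),
      digits_sum_base_pow_mul hb, digits_sum_of_lt hb]

-- `a` is built from the lowest digits of `m`, so no carry occurs in `a + c = m`.
theorem exists_add_eq_of_le_digits_sum (hb : 1 < b) (m : ℕ) {t : ℕ} (ht : t ≤ (b.digits m).sum) :
    ∃ a c, a + c = m ∧ (b.digits a).sum = t ∧ (b.digits c).sum = (b.digits m).sum - t := by
  induction m using Nat.strong_induction_on generalizing t with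
  | _ m ih =>
  have hmb := mod_lt m (zero_lt_of_lt hb)
  have hm := digits_sum_add_base_mul hb hmb (m / b)
  rw [mod_add_div] at hm
  by_cases h : t ≤ m % b
  · refine ⟨t, (m % b - t) + b * (m / b), ?_, digits_sum_of_lt (by omega), ?_⟩
    · have := mod_add_div m b
      omega
    · rw [digits_sum_add_base_mul hb (by omega), hm]
      omega
  · have hm0 : m ≠ 0 := by
      rintro rfl
      rw [digits_zero, List.sum_nil] at ht
      omega
    obtain ⟨a, c, hac, ha, hc⟩ :=
      ih (m / b) (div_lt_self (pos_of_ne_zero hm0) hb) (t := t - m % b) (by omega)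
    refine ⟨m % b + b * a, b * c, ?_, ?_, ?_⟩
    · rw [add_assoc, ← mul_add, hac, mod_add_div]
    · rw [digits_sum_add_base_mul hb hmb, ha]
      omega
    · rw [digits_sum_base_mul hb, hc]
      omega

-- With `m / b = b ^ i * (z + 1)` and `¬ b ∣ z + 1`, subtracting `c = (b - 1) * b ^ i` from `m`
-- borrows exactly once, from the digit `i + 1`.
theorem exists_add_eq_of_digits_sum_lt_base (hb : 1 < b) {m : ℕ} (hbm : b ≤ m)
    (hm : (b.digits m).sum < b) :
    ∃ a c, a + c = m ∧ 0 < c ∧ (b.digits a).sum = (b.digits m).sum ∧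
      (b.digits c).sum = b - 1 := by
  obtain ⟨i, y, hy, hxy⟩ :=
    exists_eq_pow_mul_and_not_dvd (Nat.div_pos hbm (zero_lt_of_lt hb)).ne' b hb.ne'
  obtain ⟨z, rfl⟩ : ∃ z, y = z + 1 := exists_eq_succ_of_ne_zero (by rintro rfl; simp at hy)
  set r := m % b
  have hm' : m = r + b * (b ^ i * (z + 1)) := by rw [← hxy, mod_add_div]
  have hsm : (b.digits m).sum = r + (b.digits z).sum + 1 := by
    rw [hm', digits_sum_add_base_mul hb (mod_lt m (zero_lt_of_lt hb)), digits_sum_base_pow_mul hb,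
      digits_sum_succ_of_not_dvd hb hy, add_assoc]
  have hr : r + 1 < b := by omega
  have hbi : 1 ≤ b ^ i := one_le_pow _ _ (zero_lt_of_lt hb)
  have hlt : r + b ^ i < b ^ (i + 1) := by
    rw [pow_succ]
    nlinarith
  refine ⟨r + b ^ i + b ^ (i + 1) * z, (b - 1) * b ^ i, ?_, Nat.mul_pos (by omega) hbi, ?_, ?_⟩
  · rw [hm']
    zify [hb.le]
    ring
  · rw [digits_sum_add_base_pow_mul hb hlt, digits_sum_add_base_pow hb hr, hsm]
    ring
  · rw [mul_comm, digits_sum_base_pow_mul hb, digits_sum_of_lt (by omega)]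

theorem modEq_digits_sum_of_modEq {q : ℕ} (h : b ≡ 1 [MOD q]) (m : ℕ) :
    m ≡ (b.digits m).sum [MOD q] := by
  conv_lhs => rw [← ofDigits_digits b m]
  rw [← ofDigits_one]
  exact ofDigits_modEq' b 1 q h _

end DigitSum

end Nat

open Finset

theorem padicValNat_finset_gcd_eq {ι : Type*} {p : ℕ} [Fact p.Prime] {s : Finset ι} {f : ι → ℕ}
    {i₀ : ι} (hi₀ : i₀ ∈ s) (hf : f i₀ ≠ 0)
    (hmin : ∀ i ∈ s, padicValNat p (f i₀) ≤ padicValNat p (f i)) :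
    padicValNat p (s.gcd f) = padicValNat p (f i₀) := by
  have hdvd : s.gcd f ∣ f i₀ := gcd_dvd hi₀
  refine le_antisymm ((padicValNat_dvd_iff_le hf).1 (pow_padicValNat_dvd.trans hdvd)) ?_
  refine (padicValNat_dvd_iff_le (ne_zero_of_dvd_ne_zero hf hdvd)).1 (dvd_gcd fun i hi => ?_)
  exact (pow_dvd_pow p (hmin i hi)).trans pow_padicValNat_dvd

section BinomialMultiples

variable {p q : ℕ}

theorem le_digits_sum_of_dvd (hpq : p ≡ 1 [MOD q]) {m : ℕ} (hm : m ≠ 0) (hqm : q ∣ m) :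
    q ≤ (p.digits m).sum :=
  Nat.le_of_dvd (Nat.digits_sum_pos hm)
    (((Nat.modEq_digits_sum_of_modEq hpq m).dvd_iff dvd_rfl).1 hqm)

variable [Fact p.Prime] {n : ℕ}

theorem one_le_padicValNat_choose_mul (hpq : p ≡ 1 [MOD q]) (hq : 0 < q)
    (hs : (p.digits (q * n)).sum = q) {k : ℕ} (hk : k ∈ Ioo 0 n) :
    1 ≤ padicValNat p ((q * n).choose (q * k)) := by
  obtain ⟨hk0, hkn⟩ := mem_Ioo.1 hk
  have hlt : q * k < q * n := Nat.mul_lt_mul_of_pos_left hkn hq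
  have kummer := sub_one_mul_padicValNat_choose_eq_sub_sum_digits (p := p) hlt.le
  have hqk := le_digits_sum_of_dvd hpq (Nat.mul_pos hq hk0).ne' (dvd_mul_right q k)
  have hqnk := le_digits_sum_of_dvd hpq (Nat.sub_ne_zero_of_lt hlt)
    (Nat.dvd_sub (dvd_mul_right q n) (dvd_mul_right q k))
  by_contra! hv
  rw [Nat.lt_one_iff.1 hv, mul_zero] at kummer
  omega

theorem exists_sub_one_mul_padicValNat_choose_mul_eq (hpq : p ≡ 1 [MOD q]) (hq : 0 < q)
    {a c : ℕ} (hac : a + c = q * n) (ha : (p.digits a).sum = q) (hc : 0 < c) :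
    ∃ k ∈ Ioo 0 n, (p - 1) * padicValNat p ((q * n).choose (q * k)) =
      q + (p.digits c).sum - (p.digits (q * n)).sum := by
  obtain ⟨k, rfl⟩ : q ∣ a :=
    ((Nat.modEq_digits_sum_of_modEq hpq a).dvd_iff dvd_rfl).2 (ha ▸ dvd_rfl)
  have hk0 : k ≠ 0 := by
    rintro rfl
    rw [mul_zero, Nat.digits_zero, List.sum_nil] at ha
    omega
  have hkn : k < n := Nat.lt_of_mul_lt_mul_left (a := q) (by omega)
  refine ⟨k, mem_Ioo.2 ⟨pos_of_ne_zero hk0, hkn⟩, ?_⟩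
  rw [sub_one_mul_padicValNat_choose_eq_sub_sum_digits (by omega), show q * n - q * k = c by omega,
    ha]

theorem exists_padicValNat_choose_mul_eq_one (hpq : p ≡ 1 [MOD q]) (hq : 0 < q)
    (hn : 1 < n) (hs : (p.digits (q * n)).sum = q) :
    ∃ k ∈ Ioo 0 n, padicValNat p ((q * n).choose (q * k)) = 1 := by
  have hp := (Fact.out : p.Prime).one_lt
  have hqp : q < p := by
    have := Nat.le_of_dvd (by omega) ((Nat.modEq_iff_dvd' hp.le).1 hpq.symm)
    omega
  have hpqn : p ≤ q * n := by
    by_contra! h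
    rw [Nat.digits_sum_of_lt h] at hs
    nlinarith
  obtain ⟨a, c, hac, hc, ha, hc'⟩ := Nat.exists_add_eq_of_digits_sum_lt_base hp hpqn (by omega)
  obtain ⟨k, hk, hv⟩ := exists_sub_one_mul_padicValNat_choose_mul_eq hpq hq hac (ha.trans hs) hc
  rw [hc', hs, add_tsub_cancel_left] at hv
  exact ⟨k, hk, (mul_eq_left₀ (by omega)).1 hv⟩

theorem exists_padicValNat_choose_mul_eq_zero (hpq : p ≡ 1 [MOD q]) (hq : 0 < q)
    (hn : 0 < n) (hs : (p.digits (q * n)).sum ≠ q) :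
    ∃ k ∈ Ioo 0 n, padicValNat p ((q * n).choose (q * k)) = 0 := by
  have hp := (Fact.out : p.Prime).one_lt
  have hqn := le_digits_sum_of_dvd hpq (Nat.mul_pos hq hn).ne' (dvd_mul_right q n)
  obtain ⟨a, c, hac, ha, hc⟩ := Nat.exists_add_eq_of_le_digits_sum hp (q * n) hqn
  have hc0 : 0 < c := by
    refine Nat.pos_of_ne_zero fun hc0 => hs ?_
    rw [hc0, Nat.digits_zero, List.sum_nil] at hc
    omega
  obtain ⟨k, hk, hv⟩ := exists_sub_one_mul_padicValNat_choose_mul_eq hpq hq hac ha hc0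
  rw [hc, add_tsub_cancel_of_le hqn, tsub_self] at hv
  exact ⟨k, hk, (mul_eq_zero.1 hv).resolve_left (by omega)⟩

end BinomialMultiples

theorem stmt_18 (n q p : ℕ) (hn : 1 < n) (hq : 0 < q) (hp : p.Prime)
    (hcong : p % q = 1 % q) :
    padicValNat p (Finset.gcd (Finset.Ioo 0 n) (fun k => Nat.choose (q * n) (q * k))) =
      if (Nat.digits p (q * n)).sum = q then 1 else 0 := by
  have : Fact p.Prime := ⟨hp⟩
  obtain ⟨k₀, hk₀, hv₀⟩ : ∃ k₀ ∈ Ioo 0 n,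
      padicValNat p ((q * n).choose (q * k₀)) = if (p.digits (q * n)).sum = q then 1 else 0 := by
    split_ifs with hs
    · exact exists_padicValNat_choose_mul_eq_one hcong hq hn hs
    · exact exists_padicValNat_choose_mul_eq_zero hcong hq (by omega) hs
  rw [← hv₀]
  have hq₀n : q * k₀ ≤ q * n := Nat.mul_le_mul_left q (mem_Ioo.1 hk₀).2.le
  refine padicValNat_finset_gcd_eq hk₀ (Nat.choose_pos hq₀n).ne' fun k hk => ?_
  rw [hv₀]
  split_ifs with hs
  · exact one_le_padicValNat_choose_mul hcong hq hs hk
  · exact Nat.zero_le _
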